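/- arXiv:2308.14010 — 2 statements merged into one kernel-verified Lean document; each statement's English description precedes it below -/
import Mathlib

section
/- Let D be an acyclic digraph such that for every ordered pair of vertices of D there is at most one directed path from the first to the second. Then the line digraph L⃗(D) is acyclic and for every ordered pair of vertices of L⃗(D) there is at most one directed path from the first to the second. -/
open SimpleGraph

/-- The shift graph `G_{n,2}`: vertices are pairs `(i,j)` with `i < j` in `Fin n`,
and `(i,j)` is adjacent to `(k,l)` iff `j = k` or `l = i`. -/
def ShiftGraph (n : ℕ) : SimpleGraph {p : Fin n × Fin n // p.1 < p.2} :=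
  SimpleGraph.fromRel (fun p q => p.1.2 = q.1.1)

/-- The arcs of a digraph `D`. -/
def Arcs {V : Type} (D : V → V → Prop) : Type := {e : V × V // D e.1 e.2}

/-- The line digraph `L⃗(D)`: there is an arc from `(a,b)` to `(c,d)` iff `b = c`. -/
def LineDigraph {V : Type} (D : V → V → Prop) : Arcs D → Arcs D → Prop :=
  fun e f => e.1.2 = f.1.1

/-- The underlying undirected (simple) graph of a digraph. -/
def UG {V : Type} (D : V → V → Prop) : SimpleGraph V := SimpleGraph.fromRel D

/-- The undirected line graph `L(D)`: the underlying undirected graph of the line digraph,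
in which two arcs are adjacent iff the head of one equals the tail of the other. -/
def LineGraph {V : Type} (D : V → V → Prop) : SimpleGraph (Arcs D) :=
  UG (LineDigraph D)

/-- A digraph is an oriented graph if its arc relation is irreflexive and between any
two vertices at most one of the two opposite arcs is present. -/
def Oriented {V : Type} (D : V → V → Prop) : Prop :=
  Irreflexive D ∧ ∀ a b, D a b → ¬ D b a

/-- A digraph is acyclic if it contains no directed cycle, equivalently no vertex is
reachable from itself by a nonempty directed walk. -/
def DigraphAcyclic {V : Type} (D : V → V → Prop) : Prop :=
  ∀ v, ¬ Relation.TransGen D v v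

/-- The iterated line digraph: `(IterLine V D g).1` is the vertex type of `L⃗^g(D)` and
`(IterLine V D g).2` is its arc relation. -/
def IterLine (V : Type) (D : V → V → Prop) : ℕ → (W : Type) × (W → W → Prop)
  | 0 => ⟨V, D⟩
  | g + 1 => ⟨Arcs (IterLine V D g).2, LineDigraph (IterLine V D g).2⟩

/-- `l` is (the list of vertices of) a directed path from `x` to `y` in the digraph `D`:
consecutive vertices are joined by arcs, the vertices are pairwise distinct, and the
list starts at `x` and ends at `y`. -/
def IsDipath {V : Type} (D : V → V → Prop) (x y : V) (l : List V) : Prop :=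
  l.Chain' D ∧ l.head? = some x ∧ l.getLast? = some y ∧ l.Nodup

/-- A digraph has at most one directed path from any vertex to any other vertex. -/
def UniqueDipaths {V : Type} (D : V → V → Prop) : Prop :=
  ∀ x y l₁ l₂, IsDipath D x y l₁ → IsDipath D x y l₂ → l₁ = l₂

/-- `D` is an orientation of the simple graph `G`. -/
def IsOrientationOf {V : Type} (G : SimpleGraph V) (D : V → V → Prop) : Prop :=
  (∀ a b, D a b → G.Adj a b) ∧ (∀ a b, G.Adj a b → (D a b ∨ D b a)) ∧
    (∀ a b, D a b → ¬ D b a)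

/-- A simple graph has the AOP property if it admits an acyclic orientation with at most
one directed path between any ordered pair of vertices. -/
def HasAOP {V : Type} (G : SimpleGraph V) : Prop :=
  ∃ D : V → V → Prop, IsOrientationOf G D ∧ DigraphAcyclic D ∧ UniqueDipaths D

/-- The tower function: `Tower g x` is `2^(2^(⋯^x))` with `g` twos. -/
def Tower : ℕ → ℕ → ℕ
  | 0, x => x
  | i + 1, x => 2 ^ Tower i x

/-- The graph `G` has degeneracy at most `k`: every nonempty (induced subgraph on a) set
of vertices contains a vertex with at most `k` neighbours inside the set. -/
def DegenLE {V : Type} (G : SimpleGraph V) (k : ℕ) : Prop :=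
  ∀ s : Set V, s.Nonempty → ∃ v ∈ s, ({u ∈ s | G.Adj v u} : Set V).ncard ≤ k

/-!
A directed walk `e₁ e₂ ⋯ e_k` in `L⃗(D)` is the same thing as the directed walk
`tail e₁, head e₁, …, head e_k` in `D`, and the arcs are recovered from that vertex sequence.
So a cycle in `L⃗(D)` would give a closed walk in `D`, and two paths in `L⃗(D)` with the same
ends give walks in `D` with the same ends; in an acyclic digraph every walk is a path, so by
uniqueness of paths in `D` the two vertex sequences, hence the two paths in `L⃗(D)`, agree.
-/

section

variable {V : Type} {D : V → V → Prop}

theorem Arcs.ext {e f : Arcs D} (h₁ : e.1.1 = f.1.1) (h₂ : e.1.2 = f.1.2) : e = f :=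
  Subtype.ext (Prod.ext h₁ h₂)

/-- The vertex sequence in `D` of a walk in `L⃗(D)` given by its list of arcs. -/
def Arcs.support : List (Arcs D) → List V
  | [] => []
  | e :: l => e.1.1 :: (e :: l).map (·.1.2)

theorem Arcs.support_cons_of_lineDigraph {e f : Arcs D} (l : List (Arcs D))
    (h : LineDigraph D e f) : Arcs.support (e :: f :: l) = e.1.1 :: Arcs.support (f :: l) := by
  rw [Arcs.support, Arcs.support, List.map_cons]
  exact congrArg (e.1.1 :: ·) (congrArg (· :: _) h)

theorem Arcs.head?_support (l : List (Arcs D)) :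
    (Arcs.support l).head? = l.head?.map (·.1.1) := by
  cases l <;> rfl

theorem Arcs.getLast?_support (l : List (Arcs D)) :
    (Arcs.support l).getLast? = l.getLast?.map (·.1.2) := by
  cases l with
  | nil => rfl
  | cons e l => simp [Arcs.support, List.getLast?_cons, List.getLast?_map]

theorem Arcs.isChain_support {l : List (Arcs D)} (hl : l.IsChain (LineDigraph D)) :
    (Arcs.support l).IsChain D := by
  induction l with
  | nil => exact List.IsChain.nil
  | cons e l ih =>
    cases l with
    | nil => exact List.isChain_pair.mpr e.2
    | cons f l =>
      obtain ⟨hef, hl⟩ := List.isChain_cons_cons.mp hl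
      rw [Arcs.support_cons_of_lineDigraph l hef, Arcs.support, List.isChain_cons_cons]
      exact ⟨hef ▸ e.2, ih hl⟩

theorem LineDigraph.eq_of_map_snd_eq {e : Arcs D} {l₁ l₂ : List (Arcs D)}
    (h₁ : (e :: l₁).IsChain (LineDigraph D)) (h₂ : (e :: l₂).IsChain (LineDigraph D))
    (h : l₁.map (·.1.2) = l₂.map (·.1.2)) : l₁ = l₂ := by
  induction l₁ generalizing e l₂ with
  | nil => exact (List.map_eq_nil_iff.mp h.symm).symm
  | cons f₁ l₁ ih =>
    cases l₂ with
    | nil => simp at h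
    | cons f₂ l₂ =>
      obtain ⟨he₁, h₁⟩ := List.isChain_cons_cons.mp h₁
      obtain ⟨he₂, h₂⟩ := List.isChain_cons_cons.mp h₂
      simp only [List.map_cons, List.cons.injEq] at h
      obtain rfl : f₁ = f₂ := Arcs.ext (he₁.symm.trans he₂) h.1
      rw [ih h₁ h₂ h.2]

theorem LineDigraph.eq_of_support_eq {l₁ l₂ : List (Arcs D)}
    (h₁ : l₁.IsChain (LineDigraph D)) (h₂ : l₂.IsChain (LineDigraph D))
    (h : Arcs.support l₁ = Arcs.support l₂) : l₁ = l₂ := by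
  cases l₁ with
  | nil => cases l₂ <;> simp_all [Arcs.support]
  | cons e₁ l₁ =>
    cases l₂ with
    | nil => simp [Arcs.support] at h
    | cons e₂ l₂ =>
      simp only [Arcs.support, List.map_cons, List.cons.injEq] at h
      obtain rfl : e₁ = e₂ := Arcs.ext h.1 h.2.1
      rw [LineDigraph.eq_of_map_snd_eq h₁ h₂ h.2.2]

theorem LineDigraph.transGen_fst {e f : Arcs D} (h : Relation.TransGen (LineDigraph D) e f) :
    Relation.TransGen D e.1.1 f.1.1 := by
  induction h with
  | single h => exact .single (h ▸ e.2)
  | @tail b c _ h ih => exact ih.tail (h ▸ b.2)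

theorem DigraphAcyclic.lineDigraph (h : DigraphAcyclic D) : DigraphAcyclic (LineDigraph D) :=
  fun e he => h e.1.1 (LineDigraph.transGen_fst he)

theorem DigraphAcyclic.nodup_of_isChain (h : DigraphAcyclic D) {l : List V}
    (hl : l.IsChain D) : l.Nodup := by
  have hreach : l.Pairwise (Relation.TransGen D) :=
    List.isChain_iff_pairwise.mp (hl.imp fun _ _ => .single)
  exact hreach.imp fun {a b} (hab : Relation.TransGen D a b) (hEq : a = b) => h b (hEq ▸ hab)

theorem IsDipath.support (hD : DigraphAcyclic D) {x y : Arcs D} {l : List (Arcs D)}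
    (h : IsDipath (LineDigraph D) x y l) : IsDipath D x.1.1 y.1.2 (Arcs.support l) := by
  obtain ⟨hchain, hhead, hlast, -⟩ := h
  have hchain' := Arcs.isChain_support hchain
  refine ⟨hchain', ?_, ?_, hD.nodup_of_isChain hchain'⟩
  · rw [Arcs.head?_support, hhead]; rfl
  · rw [Arcs.getLast?_support, hlast]; rfl

end

theorem stmt_17_general {V : Type} (D : V → V → Prop)
    (hacyc : DigraphAcyclic D) (huniq : UniqueDipaths D) :
    DigraphAcyclic (LineDigraph D) ∧ UniqueDipaths (LineDigraph D) := by
  refine ⟨hacyc.lineDigraph, fun x y l₁ l₂ h₁ h₂ => ?_⟩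
  exact LineDigraph.eq_of_support_eq h₁.1 h₂.1
    (huniq _ _ _ _ (h₁.support hacyc) (h₂.support hacyc))

/-- If `D` is an acyclic digraph with at most one directed path from
any vertex to any other, then its line digraph `L⃗(D)` is acyclic and also has at most
one directed path from any vertex to any other. -/
theorem stmt_17 {V : Type} (D : V → V → Prop) (hor : Oriented D)
    (hacyc : DigraphAcyclic D) (huniq : UniqueDipaths D) :
    DigraphAcyclic (LineDigraph D) ∧ UniqueDipaths (LineDigraph D) :=
  stmt_17_general D hacyc huniq
end

section
/- Let g ∈ ℕ and let D be an acyclic oriented graph whose underlying undirected graph G has odd-girth at least 5, such that for every ordered pair of vertices of D there is at most one directed path from the first to the second. Then: (1) the g-fold iterated line digraph L⃗^g(D) is acyclic and has at most one directed path between every ordered pair of its vertices, so the graph L^g(D) has the AOP property; (2) the odd-girth of L^g(D) is at least 2g+3; and (3) χ(G) ≤ T_g(χ(L^g(D))), where T_0(x) = x and T_{i+1}(x) = 2^{T_i(x)}. -/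
open SimpleGraph

/-!
Taking the line digraph preserves acyclicity and the uniqueness of directed paths: a directed path
`e₀, …, eₖ` in `L⃗(D)` is recovered from the directed path `tail e₀, head e₀, …, head eₖ` in `D`.

An odd closed walk `E` of length `m` in `L(D)` yields, through the vertices shared by consecutive
arcs, a closed walk in `G` of length `m - c`, where `c` is the number of changes of direction along
`E`. Around a closed walk `c` is even, and `c ≠ 0` since `L⃗(D)` is acyclic; so every iteration
raises the odd girth by `2`, starting from `5` since a closed walk of length `3` is a triangle.

Colouring each vertex by the set of colours of its out-arcs turns a `k`-colouring of `L(D)` into a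
`2 ^ k`-colouring of `G`, which iterates to the tower bound.
-/

open SimpleGraph Finset

section

variable {V W : Type} {D : V → V → Prop}

theorem UG_adj {a b : V} : (UG D).Adj a b ↔ a ≠ b ∧ (D a b ∨ D b a) :=
  fromRel_adj D a b

namespace DigraphAcyclic

theorem ne (h : DigraphAcyclic D) {a b : V} (hab : D a b) : a ≠ b :=
  fun he => h a (.single (he ▸ hab))

theorem asymm (h : DigraphAcyclic D) {a b : V} (hab : D a b) : ¬ D b a :=
  fun hba => h a ((Relation.TransGen.single hab).tail hba)

theorem adj_UG (h : DigraphAcyclic D) {a b : V} (hab : D a b) : (UG D).Adj a b :=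
  UG_adj.2 ⟨h.ne hab, .inl hab⟩

theorem nodup_of_isChain_s18 (h : DigraphAcyclic D) {l : List V} (hl : l.IsChain D) : l.Nodup := by
  refine (hl.imp fun _ _ => Relation.TransGen.single).pairwise.imp ?_
  rintro a _ hab rfl
  exact h a hab

theorem lineDigraph_s18 (h : DigraphAcyclic D) : DigraphAcyclic (LineDigraph D) := by
  intro e he
  have key : ∀ f f' : Arcs D, Relation.TransGen (LineDigraph D) f f' →
      Relation.ReflTransGen D f.1.2 f'.1.1 := by
    intro f f' hff'
    induction hff' with
    | single hf => exact hf ▸ .refl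
    | @tail b c _ hbc ih => exact hbc ▸ ih.tail b.2
  exact h e.1.2 (Relation.TransGen.tail' (key e e he) e.2)

theorem iterLine (h : DigraphAcyclic D) (g : ℕ) : DigraphAcyclic (IterLine V D g).2 := by
  induction g with
  | zero => exact h
  | succ g ih => exact ih.lineDigraph_s18

theorem isOrientationOf (h : DigraphAcyclic D) : IsOrientationOf (UG D) D :=
  ⟨fun _ _ => h.adj_UG, fun _ _ hab => (UG_adj.1 hab).2, fun _ _ => h.asymm⟩

theorem swap {R : W → W → Prop} (h : DigraphAcyclic R) : DigraphAcyclic (Function.swap R) :=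
  fun a ha => h a (Relation.transGen_swap.1 ha)

theorem exists_not_rel_of_closed {R : W → W → Prop} (h : DigraphAcyclic R) {f : ℕ → W} {m : ℕ}
    (hm : 0 < m) (hf : f m = f 0) : ∃ i < m, ¬ R (f i) (f (i + 1)) := by
  by_contra! hall
  have hpath := transGen_of_succ_of_lt (fun i j => R (f i) (f j))
    (fun i hi => by simpa using hall i (Set.mem_Ico.1 hi).2) hm
  have hcycle : Relation.TransGen R (f 0) (f m) := hpath.lift f fun _ _ => id
  exact h (f 0) (hf ▸ hcycle)

end DigraphAcyclic

theorem lineDigraph_heads_isChain {l : List (Arcs D)} (hl : l.IsChain (LineDigraph D)) :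
    (l.map fun e => e.1.2).IsChain D :=
  List.isChain_map_of_isChain _ (fun _ f hef => hef ▸ f.2) hl

theorem eq_of_isChain_of_heads_eq {a : Arcs D} :
    ∀ {l₁ l₂ : List (Arcs D)}, (a :: l₁).IsChain (LineDigraph D) →
      (a :: l₂).IsChain (LineDigraph D) → l₁.map (fun e => e.1.2) = l₂.map (fun e => e.1.2) →
      l₁ = l₂
  | [], [], _, _, _ => rfl
  | b₁ :: t₁, b₂ :: t₂, h₁, h₂, hmap => by
    rw [List.isChain_cons_cons] at h₁ h₂
    simp only [List.map_cons, List.cons.injEq] at hmap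
    have hb : b₁ = b₂ := Subtype.ext (Prod.ext (h₁.1.symm.trans h₂.1) hmap.1)
    subst hb
    rw [eq_of_isChain_of_heads_eq h₁.2 h₂.2 hmap.2]

theorem IsDipath.lineDigraph_heads (hac : DigraphAcyclic D) {e f : Arcs D} {l : List (Arcs D)}
    (h : IsDipath (LineDigraph D) e f (e :: l)) :
    IsDipath D e.1.1 f.1.2 (e.1.1 :: (e :: l).map fun a => a.1.2) := by
  obtain ⟨hc, -, hlast, -⟩ := h
  have hchain : (e.1.1 :: (e :: l).map fun a => a.1.2).IsChain D :=
    List.isChain_cons_cons.2 ⟨e.2, lineDigraph_heads_isChain hc⟩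
  refine ⟨hchain, rfl, ?_, hac.nodup_of_isChain_s18 hchain⟩
  rw [List.getLast?_cons, List.getLast?_map, hlast]
  rfl

theorem UniqueDipaths.lineDigraph_s18 (hac : DigraphAcyclic D) (hu : UniqueDipaths D) :
    UniqueDipaths (LineDigraph D) := by
  intro e f l₁ l₂ h₁ h₂
  obtain ⟨l₁, rfl⟩ := List.head?_eq_some_iff.1 h₁.2.1
  obtain ⟨l₂, rfl⟩ := List.head?_eq_some_iff.1 h₂.2.1
  have hmap := hu _ _ _ _ (h₁.lineDigraph_heads hac) (h₂.lineDigraph_heads hac)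
  simp only [List.map_cons, List.cons.injEq, true_and] at hmap
  rw [eq_of_isChain_of_heads_eq h₁.1 h₂.1 hmap]

theorem UniqueDipaths.iterLine (hu : UniqueDipaths D) (hac : DigraphAcyclic D) (g : ℕ) :
    UniqueDipaths (IterLine V D g).2 := by
  induction g with
  | zero => exact hu
  | succ g ih => exact ih.lineDigraph_s18 (hac.iterLine g)

theorem hasAOP_UG (hac : DigraphAcyclic D) (hu : UniqueDipaths D) : HasAOP (UG D) :=
  ⟨D, hac.isOrientationOf, hac, hu⟩

/-- The colour of an arc `(a, b)` lies in the set of `a` but not in that of `b`, as every out-arc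
of `b` is adjacent to `(a, b)`. -/
theorem colorable_two_pow_of_lineGraph {k : ℕ} (h : (UG (LineDigraph D)).Colorable k) :
    (UG D).Colorable (2 ^ k) := by
  obtain ⟨C⟩ := h
  let c : V → Set (Fin k) := fun v => {i | ∃ w, ∃ hvw : D v w, C ⟨(v, w), hvw⟩ = i}
  have hc : ∀ ⦃a b⦄, a ≠ b → D a b → c a ≠ c b := by
    intro a b hne hab heq
    obtain ⟨z, hbz, hz⟩ : C ⟨(a, b), hab⟩ ∈ c b := heq ▸ ⟨b, hab, rfl⟩
    have hadj : (UG (LineDigraph D)).Adj ⟨(a, b), hab⟩ ⟨(b, z), hbz⟩ :=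
      UG_adj.2 ⟨fun he => hne (congrArg (fun e : Arcs D => e.1.1) he), .inl rfl⟩
    exact C.valid hadj hz.symm
  have col : (UG D).Coloring (Set (Fin k)) := Coloring.mk c fun {a b} hab => by
    rcases UG_adj.1 hab with ⟨hne, hd | hd⟩
    exacts [hc hne hd, (hc hne.symm hd).symm]
  simpa using col.colorable

theorem tower_two_pow (g k : ℕ) : Tower g (2 ^ k) = Tower (g + 1) k := by
  induction g with
  | zero => rfl
  | succ g ih => exact congrArg (2 ^ ·) ih

theorem colorable_tower_of_iterLine {g k : ℕ} (h : (UG (IterLine V D g).2).Colorable k) :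
    (UG D).Colorable (Tower g k) := by
  induction g generalizing k with
  | zero => exact h
  | succ g ih => exact tower_two_pow g k ▸ ih (colorable_two_pow_of_lineGraph h)

theorem SimpleGraph.Walk.exists_periodic_adj {G : SimpleGraph W} {x : W} (w : G.Walk x x)
    (hw : w.length ≠ 0) :
    ∃ u : ℕ → W, Function.Periodic u w.length ∧ ∀ i, G.Adj (u i) (u (i + 1)) := by
  refine ⟨fun i => w.getVert (i % w.length), fun i => by simp, fun i => ?_⟩
  have hi := Nat.mod_lt i (Nat.pos_of_ne_zero hw)
  have hadj := w.adj_getVert_succ hi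
  simp only [← Nat.mod_add_mod i]
  rcases (show i % w.length + 1 ≤ w.length from hi).lt_or_eq with hlt | heq
  · rwa [Nat.mod_eq_of_lt hlt]
  · rw [heq, Nat.mod_self, w.getVert_zero]
    rwa [heq, w.getVert_length] at hadj

theorem SimpleGraph.exists_walk_of_lazy [DecidableEq W] {G : SimpleGraph W} (u : ℕ → W)
    (hu : ∀ i, u (i + 1) = u i ∨ G.Adj (u i) (u (i + 1))) (k : ℕ) :
    ∃ w : G.Walk (u 0) (u k), w.length = #{i ∈ range k | u i ≠ u (i + 1)} := by
  induction k with
  | zero => exact ⟨.nil, rfl⟩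
  | succ k ih =>
    obtain ⟨w, hw⟩ := ih
    rw [range_add_one, filter_insert]
    rcases hu k with heq | hadj
    · exact ⟨w.copy rfl heq.symm, by simp [hw, heq]⟩
    · refine ⟨w.concat hadj, ?_⟩
      rw [if_pos hadj.ne, card_insert_of_notMem (by simp), Walk.length_concat, hw]

theorem even_card_changes_iff (σ : ℕ → Bool) (m : ℕ) :
    Even #{i ∈ range m | σ i ≠ σ (i + 1)} ↔ σ m = σ 0 := by
  induction m with
  | zero => simp
  | succ m ih =>
    rw [range_add_one, filter_insert]
    split_ifs with h
    · rw [card_insert_of_notMem (by simp), Nat.even_add_one, ih]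
      revert h; cases σ 0 <;> cases σ m <;> cases σ (m + 1) <;> simp
    · rw [ih, not_not.1 h]

section Junction

def IsStepDirection (E : ℕ → Arcs D) (σ : ℕ → Bool) : Prop :=
  ∀ i, cond (σ i) (LineDigraph D (E i) (E (i + 1))) (LineDigraph D (E (i + 1)) (E i))

/-- Under `IsStepDirection E σ`, the vertex shared by `E i` and `E (i + 1)`. -/
def junction (E : ℕ → Arcs D) (σ : ℕ → Bool) (i : ℕ) : V :=
  if σ i then (E i).1.2 else (E i).1.1

variable {E : ℕ → Arcs D} {σ : ℕ → Bool}

theorem junction_eq_succ (hσ : IsStepDirection E σ) (i : ℕ) :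
    junction E σ i = if σ i then (E (i + 1)).1.1 else (E (i + 1)).1.2 := by
  have := hσ i
  unfold junction
  cases h : σ i <;> simp only [h, cond_true, cond_false, if_true, Bool.false_eq_true,
    if_false] at this ⊢
  exacts [this.symm, this]

theorem junction_succ_eq_iff (hac : DigraphAcyclic D) (hσ : IsStepDirection E σ) (i : ℕ) :
    junction E σ (i + 1) = junction E σ i ↔ σ i ≠ σ (i + 1) := by
  have := hac.ne (E (i + 1)).2
  rw [junction_eq_succ hσ i, junction]
  cases σ i <;> cases σ (i + 1) <;> simp [this, this.symm]

theorem adj_junction (hac : DigraphAcyclic D) (hσ : IsStepDirection E σ) {i : ℕ}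
    (h : σ i = σ (i + 1)) : (UG D).Adj (junction E σ i) (junction E σ (i + 1)) := by
  have := hac.adj_UG (E (i + 1)).2
  rw [junction_eq_succ hσ i, junction, ← h]
  cases σ i
  · exact this.symm
  · exact this

theorem IsStepDirection.exists_ne_succ (hσ : IsStepDirection E σ) (hac : DigraphAcyclic D)
    {m : ℕ} (hm : 0 < m) (hE : E m = E 0) : ∃ i < m, σ i ≠ σ (i + 1) := by
  by_contra! hconst
  have hσ0 : ∀ i < m, σ i = σ 0 := by
    intro i hi
    induction i with
    | zero => rfl
    | succ i ih => rw [← hconst i (by omega), ih (by omega)]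
  cases h0 : σ 0
  · obtain ⟨i, hi, hnot⟩ := hac.lineDigraph_s18.swap.exists_not_rel_of_closed hm hE
    exact hnot (by simpa [hσ0 i hi, h0] using hσ i)
  · obtain ⟨i, hi, hnot⟩ := hac.lineDigraph_s18.exists_not_rel_of_closed hm hE
    exact hnot (by simpa [hσ0 i hi, h0] using hσ i)

end Junction

/-- Odd girth at least `b`, phrased through closed walks, which is the form the line-graph step
produces (a shortest odd closed walk is a cycle). -/
def OddClosedWalksGE (G : SimpleGraph W) (b : ℕ) : Prop :=
  ∀ ⦃x : W⦄ (w : G.Walk x x), Odd w.length → b ≤ w.length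

theorem oddClosedWalksGE_five {G : SimpleGraph W}
    (h : ∀ (v : W) (w : G.Walk v v), w.IsCycle → Odd w.length → 5 ≤ w.length) :
    OddClosedWalksGE G 5 := by
  intro x w hodd
  by_contra! hlt
  rcases w with _ | ⟨h₁, _ | ⟨h₂, _ | ⟨h₃, _ | ⟨_, p⟩⟩⟩⟩
  · simp at hodd
  · exact G.loopless.irrefl _ h₁
  · simp [Nat.odd_iff] at hodd
  · refine absurd (h _ _ ?_ hodd) (by simp)
    simp [Walk.cons_isCycle_iff, Walk.cons_isPath_iff, h₁.ne, h₂.ne, h₃.ne, h₁.ne.symm,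
      h₃.ne.symm]
  · simp only [Walk.length_cons] at hodd hlt
    obtain ⟨k, hk⟩ := hodd
    omega

/-- The junctions of `E` form a closed walk in `G` that stalls exactly where the direction changes,
and `c` is the number of direction changes. -/
theorem exists_closedWalk_of_lineGraph (hac : DigraphAcyclic D) {E : ℕ → Arcs D} {m : ℕ}
    (hm : 0 < m) (hE : Function.Periodic E m)
    (hadj : ∀ i, (UG (LineDigraph D)).Adj (E i) (E (i + 1))) :
    ∃ (x : V) (p : (UG D).Walk x x) (c : ℕ), Even c ∧ c ≠ 0 ∧ p.length + c = m := by
  classical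
  let σ : ℕ → Bool := fun i => decide (LineDigraph D (E i) (E (i + 1)))
  have hσ : IsStepDirection E σ := fun i => by
    by_cases h : LineDigraph D (E i) (E (i + 1))
    · simp [σ, h]
    · simpa [σ, h] using (UG_adj.1 (hadj i)).2.resolve_left h
  have hσper : Function.Periodic σ m := fun i => by
    simp only [σ, hE i, add_right_comm i m 1, hE (i + 1)]
  have hE0 : E m = E 0 := by simpa using hE 0
  have hσ0 : σ m = σ 0 := by simpa using hσper 0
  obtain ⟨p, hp⟩ := exists_walk_of_lazy (G := UG D) (junction E σ) (fun i => by
    by_cases h : σ i = σ (i + 1)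
    · exact .inr (adj_junction hac hσ h)
    · exact .inl ((junction_succ_eq_iff hac hσ i).2 h)) m
  have hclosed : junction E σ m = junction E σ 0 := by simp only [junction, hE0, hσ0]
  refine ⟨_, p.copy rfl hclosed, #{i ∈ range m | σ i ≠ σ (i + 1)},
    (even_card_changes_iff σ m).2 hσ0, ?_, ?_⟩
  · obtain ⟨i, hi, hne⟩ := hσ.exists_ne_succ hac hm hE0
    exact card_ne_zero.2 ⟨i, mem_filter.2 ⟨mem_range.2 hi, hne⟩⟩
  · have hstall : ∀ i, junction E σ i ≠ junction E σ (i + 1) ↔ ¬ σ i ≠ σ (i + 1) := fun i => by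
      rw [ne_comm, Ne, junction_succ_eq_iff hac hσ i]
    rw [Walk.length_copy, hp, filter_congr fun i _ => hstall i, add_comm,
      card_filter_add_card_filter_not, card_range]

theorem OddClosedWalksGE.lineDigraph_s18 (hac : DigraphAcyclic D) {b : ℕ}
    (h : OddClosedWalksGE (UG D) b) : OddClosedWalksGE (UG (LineDigraph D)) (b + 2) := by
  intro e w hodd
  obtain ⟨E, hE, hadj⟩ := w.exists_periodic_adj hodd.pos.ne'
  obtain ⟨x, p, c, ⟨k, rfl⟩, hc, hpc⟩ := exists_closedWalk_of_lineGraph hac hodd.pos hE hadj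
  have hp : Odd p.length := (Nat.odd_add.1 (hpc ▸ hodd)).2 ⟨k, rfl⟩
  have := h p hp
  omega

theorem OddClosedWalksGE.iterLine (hac : DigraphAcyclic D) {b : ℕ}
    (h : OddClosedWalksGE (UG D) b) (g : ℕ) :
    OddClosedWalksGE (UG (IterLine V D g).2) (b + 2 * g) := by
  induction g with
  | zero => exact h
  | succ g ih => exact ih.lineDigraph_s18 (hac.iterLine g)

end

theorem stmt_18_general {V : Type} (D : V → V → Prop)
    (hacyc : DigraphAcyclic D) (huniq : UniqueDipaths D)
    (hog : ∀ (v : V) (w : (UG D).Walk v v), w.IsCycle → Odd w.length → 5 ≤ w.length)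
    (g : ℕ) :
    (DigraphAcyclic (IterLine V D g).2 ∧ UniqueDipaths (IterLine V D g).2 ∧
        HasAOP (UG (IterLine V D g).2)) ∧
      (∀ (x : (IterLine V D g).1) (w : (UG (IterLine V D g).2).Walk x x),
        w.IsCycle → Odd w.length → 2 * g + 3 ≤ w.length) ∧
      (∀ k : ℕ, (UG (IterLine V D g).2).Colorable k →
        (UG D).Colorable (Tower g k)) := by
  have hacyc_g := hacyc.iterLine g
  have huniq_g := huniq.iterLine hacyc g
  refine ⟨⟨hacyc_g, huniq_g, hasAOP_UG hacyc_g huniq_g⟩, fun _ w _ hodd => ?_,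
    fun k => colorable_tower_of_iterLine⟩
  have := (oddClosedWalksGE_five hog).iterLine hacyc g w hodd
  omega

/-- Let `D` be an acyclic oriented graph whose underlying undirected
graph `G` has odd-girth at least `5`, with at most one directed path between any
ordered pair of vertices. Then for every `g`: (1) `L⃗^g(D)` is acyclic and has at most
one directed path between any ordered pair of its vertices, so `L^g(D)` has the AOP
property; (2) the odd-girth of `L^g(D)` is at least `2g + 3`; and (3)
`χ(G) ≤ T_g(χ(L^g(D)))` where `T_0(x) = x` and `T_{i+1}(x) = 2^{T_i(x)}`. -/
theorem stmt_18 {V : Type} [Fintype V] (D : V → V → Prop) (hor : Oriented D)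
    (hacyc : DigraphAcyclic D) (huniq : UniqueDipaths D)
    (hog : ∀ (v : V) (w : (UG D).Walk v v), w.IsCycle → Odd w.length → 5 ≤ w.length)
    (g : ℕ) :
    (DigraphAcyclic (IterLine V D g).2 ∧ UniqueDipaths (IterLine V D g).2 ∧
        HasAOP (UG (IterLine V D g).2)) ∧
      (∀ (x : (IterLine V D g).1) (w : (UG (IterLine V D g).2).Walk x x),
        w.IsCycle → Odd w.length → 2 * g + 3 ≤ w.length) ∧
      (∀ k : ℕ, (UG (IterLine V D g).2).Colorable k →
        (UG D).Colorable (Tower g k)) :=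
  stmt_18_general D hacyc huniq hog g
end
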